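/- Let A ⊆ B(G_μ), B ⊆ B(G_ν) and C ⊆ B(G_ξ) be von Neumann algebras with cyclic and separating unit vectors Λ_μ, Λ_ν, Λ_ξ defining faithful normal states μ, ν, ξ. Let ω be a coupling of (A, μ) and (B, ν) with cyclic representation (H_ω, π_ω, Ω_ω), and ψ a coupling of (B, ν) and (C, ξ) with cyclic representation (K_ψ, φ_ψ, Ψ_ψ). Let H_μ and H_ν be the closures of π_ω(A ⊗ 1)Ω_ω and π_ω(1 ⊗ B′)Ω_ω in H_ω, let K_ν and K_ξ be the closures of φ_ψ(B ⊗ 1)Ψ_ψ and φ_ψ(1 ⊗ C′)Ψ_ψ in K_ψ, let P_ν and Q_ν be the orthogonal projections of H_ω onto H_ν and of K_ψ onto K_ν respectively, and let u_ν : G_ν → H_ν and v_ν : G_ν → K_ν be the unitaries with u_ν b′Λ_ν = π_ω(1 ⊗ b′)Ω_ω for b′ ∈ B′ and v_ν bΛ_ν = φ_ψ(b ⊗ 1)Ψ_ψ for b ∈ B. Then the composition ω ∘ ψ equals the product coupling μ ⊙ ξ′ if and only if the subspaces u_ν*[P_ν H_μ ⊖ ℂΩ_ω] and v_ν*[Q_ν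 K_ξ ⊖ ℂΨ_ψ] of G_ν are orthogonal. -/

import Mathlib

open scoped ComplexOrder

noncomputable section

noncomputable instance {H : Type} [NormedAddCommGroup H] [InnerProductSpace ℂ H]
    [CompleteSpace H] (A : VonNeumannAlgebra H) : Algebra ℂ ↥A :=
  inferInstanceAs (Algebra ℂ ↥A.toStarSubalgebra)

variable {Gm Gn Gx Hw Kp : Type}
  [NormedAddCommGroup Gm] [InnerProductSpace ℂ Gm] [CompleteSpace Gm]
  [NormedAddCommGroup Gn] [InnerProductSpace ℂ Gn] [CompleteSpace Gn]
  [NormedAddCommGroup Gx] [InnerProductSpace ℂ Gx] [CompleteSpace Gx]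
  [NormedAddCommGroup Hw] [InnerProductSpace ℂ Hw] [CompleteSpace Hw]
  [NormedAddCommGroup Kp] [InnerProductSpace ℂ Kp] [CompleteSpace Kp]

/-- A coupling of `(A, μ)` and `(B, ν)`: a state on the algebraic tensor product `A ⊙ B′`
(equivalently, a bilinear functional, positive on elements of the form `x* x`) whose
marginals are `μ` and `ν′`. -/
def IsCoupling {G₁ G₂ : Type}
    [NormedAddCommGroup G₁] [InnerProductSpace ℂ G₁] [CompleteSpace G₁]
    [NormedAddCommGroup G₂] [InnerProductSpace ℂ G₂] [CompleteSpace G₂]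
    (A : VonNeumannAlgebra G₁) (B : VonNeumannAlgebra G₂) (Λ₁ : G₁) (Λ₂ : G₂)
    (ω : ↥A →ₗ[ℂ] ↥B.commutant →ₗ[ℂ] ℂ) : Prop :=
  (∀ (n : ℕ) (a : Fin n → ↥A) (b : Fin n → ↥B.commutant),
      0 ≤ ∑ i, ∑ j, ω (star (a i) * a j) (star (b i) * b j)) ∧
  (∀ a : ↥A, ω a 1 = inner ℂ Λ₁ ((a : G₁ →L[ℂ] G₁) Λ₁)) ∧
  (∀ b : ↥B.commutant, ω 1 b = inner ℂ Λ₂ ((b : G₂ →L[ℂ] G₂) Λ₂))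

/-- Standing hypotheses on `(A, Λ)`: unit vector, cyclic and separating. -/
def Std {G : Type} [NormedAddCommGroup G] [InnerProductSpace ℂ G] [CompleteSpace G]
    (A : VonNeumannAlgebra G) (Λ : G) : Prop :=
  ‖Λ‖ = 1 ∧ Dense (Set.range fun a : ↥A => (a : G →L[ℂ] G) Λ) ∧
  (∀ a : ↥A, (a : G →L[ℂ] G) Λ = 0 → a = 0)

/-!
For `a ∈ A` and `c' ∈ C′`, centre the generators `π_ω(a ⊗ 1)Ω_ω` and `φ_ψ(1 ⊗ c')Ψ_ψ` against
`Ω_ω` and `Ψ_ψ`. Because `E_ω(a) ∈ B` commutes with `B′`, `u_ν*` sends `π_ω(a ⊗ 1)Ω_ω` to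
`E_ω(a)Λ_ν`, and `⟨v_ν* φ_ψ(1 ⊗ c')Ψ_ψ, bΛ_ν⟩ = ψ(b ⊗ c'*)`; so the images of the centred
generators under `v_ν*` and `u_ν*` have inner product `(ω ∘ ψ)(a ⊗ c'*) - μ(a) ξ′(c'*)`.
Since `u_ν*` and `v_ν*` vanish on the complements of `H_ν` and `K_ν`, the projections `P_ν`, `Q_ν`
can be dropped, and orthogonality on centred generators extends by continuity to
`H_μ ⊖ ℂΩ_ω` and `K_ξ ⊖ ℂΨ_ψ`.
-/

open scoped InnerProductSpace
open ContinuousLinearMap (adjoint)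
open Submodule (span)

section InnerProductSpace

variable {𝕜 E F G : Type*} [RCLike 𝕜]
  [NormedAddCommGroup E] [InnerProductSpace 𝕜 E] [NormedAddCommGroup F] [InnerProductSpace 𝕜 F]
  [NormedAddCommGroup G] [InnerProductSpace 𝕜 G]

theorem inner_map_map_eq_zero_of_mem_closure_span (R : E →L[𝕜] G) (S : F →L[𝕜] G)
    {s : Set E} {t : Set F} (h : ∀ x ∈ s, ∀ y ∈ t, ⟪R x, S y⟫_𝕜 = 0) {x : E} {y : F}
    (hx : x ∈ (span 𝕜 s).topologicalClosure) (hy : y ∈ (span 𝕜 t).topologicalClosure) :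
    ⟪R x, S y⟫_𝕜 = 0 := by
  have hs : ∀ x ∈ s, ⟪R x, S y⟫_𝕜 = 0 := fun x' hx' =>
    ((innerSL 𝕜 (R x')).comp S).eqOn_closure_span (g := 0) (fun y' hy' => h x' hx' y' hy') hy
  exact inner_eq_zero_symm.mp <| ((innerSL 𝕜 (S y)).comp R).eqOn_closure_span (g := 0)
    (fun x' hx' => inner_eq_zero_symm.mp (hs x' hx')) hx

theorem inner_sub_inner_smul_self_eq_zero {e : E} (he : ‖e‖ = 1) (x : E) :
    ⟪e, x - ⟪e, x⟫_𝕜 • e⟫_𝕜 = 0 := by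
  simp [inner_sub_right, inner_smul_right, inner_self_eq_norm_sq_to_K, he]

theorem forall_inner_image_orthogonal_iff (R : E →L[𝕜] G) (S : F →L[𝕜] G)
    {s : Set E} {t : Set F} {Ω : E} {Ψ : F}
    (hΩ : Ω ∈ (span 𝕜 s).topologicalClosure) (hΩ₁ : ‖Ω‖ = 1)
    (hΨ : Ψ ∈ (span 𝕜 t).topologicalClosure) (hΨ₁ : ‖Ψ‖ = 1) :
    (∀ ξ₁ ∈ R '' {x | x ∈ (span 𝕜 s).topologicalClosure ∧ ⟪Ω, x⟫_𝕜 = 0},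
      ∀ ξ₂ ∈ S '' {y | y ∈ (span 𝕜 t).topologicalClosure ∧ ⟪Ψ, y⟫_𝕜 = 0}, ⟪ξ₁, ξ₂⟫_𝕜 = 0) ↔
      ∀ x ∈ s, ∀ y ∈ t, ⟪R (x - ⟪Ω, x⟫_𝕜 • Ω), S (y - ⟪Ψ, y⟫_𝕜 • Ψ)⟫_𝕜 = 0 := by
  constructor
  · intro h x hx y hy
    refine h _ ⟨_, ⟨?_, inner_sub_inner_smul_self_eq_zero hΩ₁ x⟩, rfl⟩
      _ ⟨_, ⟨?_, inner_sub_inner_smul_self_eq_zero hΨ₁ y⟩, rfl⟩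
    · exact sub_mem ((span 𝕜 s).le_topologicalClosure (Submodule.subset_span hx))
        (Submodule.smul_mem _ _ hΩ)
    · exact sub_mem ((span 𝕜 t).le_topologicalClosure (Submodule.subset_span hy))
        (Submodule.smul_mem _ _ hΨ)
  · rintro h _ ⟨x, ⟨hx, hxΩ⟩, rfl⟩ _ ⟨y, ⟨hy, hyΨ⟩, rfl⟩
    have := inner_map_map_eq_zero_of_mem_closure_span
      (R ∘L (ContinuousLinearMap.id 𝕜 E - (innerSL 𝕜 Ω).smulRight Ω))
      (S ∘L (ContinuousLinearMap.id 𝕜 F - (innerSL 𝕜 Ψ).smulRight Ψ)) (by simpa using h) hx hy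
    simpa [hxΩ, hyΨ] using this

variable [CompleteSpace E] [CompleteSpace F]

theorem adjoint_apply_eq_of_inner_eq {u : E →L[𝕜] F} (hu : ∀ x, ‖u x‖ = ‖x‖) {s : Set E}
    (hrange : ∀ x, u x ∈ (span 𝕜 (u '' s)).topologicalClosure) {w : F} {ξ : E}
    (h : ∀ η ∈ s, ⟪u η, w⟫_𝕜 = ⟪η, ξ⟫_𝕜) : adjoint u w = ξ := by
  have hinner := (LinearMap.norm_map_iff_inner_map_map u).mp hu
  have horth : ∀ η, ⟪w - u ξ, u η⟫_𝕜 = 0 := fun η =>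
    (innerSL 𝕜 (w - u ξ)).eqOn_closure_span (g := 0) (by
      rintro _ ⟨η', hη', rfl⟩
      rw [innerSL_apply_apply, zero_apply, inner_sub_left, hinner,
        ← inner_conj_symm, h η' hη', inner_conj_symm, sub_self]) (hrange η)
  refine ext_inner_left 𝕜 fun η => ?_
  rw [ContinuousLinearMap.adjoint_inner_right, ← hinner, ← sub_eq_zero, ← inner_sub_right,
    inner_eq_zero_symm, horth]

theorem adjoint_apply_apply_of_norm_map {u : E →L[𝕜] F} (hu : ∀ x, ‖u x‖ = ‖x‖) (x : E) :
    adjoint u (u x) = x :=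
  DFunLike.congr_fun ((ContinuousLinearMap.norm_map_iff_adjoint_comp_self u).mp hu) x

theorem adjoint_apply_eq_of_inner_sub_eq_zero {u : E →L[𝕜] F} {K : Submodule 𝕜 F}
    (hu : ∀ η, u η ∈ K) {w z : F} (h : ∀ v ∈ K, ⟪z - w, v⟫_𝕜 = 0) :
    adjoint u w = adjoint u z := by
  refine ext_inner_left 𝕜 fun η => ?_
  rw [ContinuousLinearMap.adjoint_inner_right, ContinuousLinearMap.adjoint_inner_right,
    ← sub_eq_zero, ← inner_sub_right, inner_eq_zero_symm, ← neg_sub, inner_neg_left, h _ (hu η),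
    neg_zero]

theorem image_adjoint_proj_eq {u : E →L[𝕜] F} {K M : Submodule 𝕜 F} {P : F → F}
    (hP : ∀ x, ∀ v ∈ K, ⟪x - P x, v⟫_𝕜 = 0) (hu : ∀ η, u η ∈ K) {Ω : F} (hΩ : Ω ∈ K) :
    adjoint u '' {w | (∃ x ∈ M, w = P x) ∧ ⟪Ω, w⟫_𝕜 = 0} =
      adjoint u '' {x | x ∈ M ∧ ⟪Ω, x⟫_𝕜 = 0} := by
  have hPΩ : ∀ x, ⟪Ω, P x⟫_𝕜 = ⟪Ω, x⟫_𝕜 := fun x => by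
    rw [← sub_eq_zero, ← inner_sub_right, inner_eq_zero_symm, ← neg_sub, inner_neg_left,
      hP x Ω hΩ, neg_zero]
  ext ξ
  constructor
  · rintro ⟨_, ⟨⟨x, hx, rfl⟩, hxΩ⟩, rfl⟩
    exact ⟨x, ⟨hx, hPΩ x ▸ hxΩ⟩, (adjoint_apply_eq_of_inner_sub_eq_zero hu (hP x)).symm⟩
  · rintro ⟨x, ⟨hx, hxΩ⟩, rfl⟩
    exact ⟨P x, ⟨⟨x, hx, rfl⟩, (hPΩ x).trans hxΩ⟩, adjoint_apply_eq_of_inner_sub_eq_zero hu (hP x)⟩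

theorem inner_apply_apply_of_commute {S T : Type*} [Semiring S] [Algebra 𝕜 S] [Star S]
    [Semiring T] [Algebra 𝕜 T] [Star T] (π₁ : S →⋆ₐ[𝕜] (E →L[𝕜] E)) (π₂ : T →⋆ₐ[𝕜] (E →L[𝕜] E))
    (hcomm : ∀ s t, Commute (π₁ s) (π₂ t)) (Ω : E) (s : S) (t : T) :
    ⟪π₂ t Ω, π₁ s Ω⟫_𝕜 = ⟪Ω, π₁ s (π₂ (star t) Ω)⟫_𝕜 := by
  rw [← mul_apply_eq_comp, (hcomm s (star t)).eq, map_star,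
    ContinuousLinearMap.star_eq_adjoint, mul_apply_eq_comp,
    ContinuousLinearMap.adjoint_inner_right]

end InnerProductSpace

section Coupling

variable {G H K : Type}
  [NormedAddCommGroup G] [InnerProductSpace ℂ G] [CompleteSpace G]
  [NormedAddCommGroup H] [InnerProductSpace ℂ H] [CompleteSpace H]
  [NormedAddCommGroup K] [InnerProductSpace ℂ K] [CompleteSpace K]
  {A T : Type*} [Semiring A] [Algebra ℂ A] [Star A] [Semiring T] [Algebra ℂ T] [Star T]
  {B : VonNeumannAlgebra G} {Λ : G}

theorem adjoint_apply_rep_eq {π₁ : A →⋆ₐ[ℂ] (H →L[ℂ] H)} {π₂ : B.commutant →⋆ₐ[ℂ] (H →L[ℂ] H)}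
    {Ω : H} {ω : A →ₗ[ℂ] B.commutant →ₗ[ℂ] ℂ} {E : A → B} {u : G →L[ℂ] H}
    (hcomm : ∀ a b', Commute (π₁ a) (π₂ b')) (hrep : ∀ a b', ω a b' = ⟪Ω, π₁ a (π₂ b' Ω)⟫_ℂ)
    (hE : ∀ a (b' : B.commutant), ω a b' = ⟪Λ, (E a : G →L[ℂ] G) ((b' : G →L[ℂ] G) Λ)⟫_ℂ)
    (hu : ∀ ξ, ‖u ξ‖ = ‖ξ‖) (huΛ : ∀ b' : B.commutant, u ((b' : G →L[ℂ] G) Λ) = π₂ b' Ω)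
    (hrange : ∀ ξ, u ξ ∈ (span ℂ (Set.range fun b' => π₂ b' Ω)).topologicalClosure) (a : A) :
    adjoint u (π₁ a Ω) = (E a : G →L[ℂ] G) Λ := by
  have himage : u '' Set.range (fun b' : B.commutant => (b' : G →L[ℂ] G) Λ) =
      Set.range fun b' => π₂ b' Ω := by
    rw [← Set.range_comp]
    exact congrArg Set.range (funext huΛ)
  refine adjoint_apply_eq_of_inner_eq hu (himage ▸ hrange) ?_
  rintro _ ⟨b', rfl⟩
  have hcomm' : (E a : G →L[ℂ] G) * (star b' : B.commutant) = (star b' : B.commutant) * E a :=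
    VonNeumannAlgebra.mem_commutant_iff.mp (star b').2 _ (E a).2
  have hstar : ((star b' : B.commutant) : G →L[ℂ] G) = adjoint (b' : G →L[ℂ] G) :=
    ContinuousLinearMap.star_eq_adjoint _
  rw [huΛ, inner_apply_apply_of_commute π₁ π₂ hcomm, ← hrep, hE, ← mul_apply_eq_comp, hcomm',
    mul_apply_eq_comp, hstar, ContinuousLinearMap.adjoint_inner_right]

theorem inner_adjoint_rep_eq {φ₁ : B →⋆ₐ[ℂ] (K →L[ℂ] K)} {φ₂ : T →⋆ₐ[ℂ] (K →L[ℂ] K)} {Ψ : K}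
    {ψ : B →ₗ[ℂ] T →ₗ[ℂ] ℂ} {v : G →L[ℂ] K} (hcomm : ∀ b c', Commute (φ₁ b) (φ₂ c'))
    (hrep : ∀ b c', ψ b c' = ⟪Ψ, φ₁ b (φ₂ c' Ψ)⟫_ℂ) (hv : ∀ b : B, v ((b : G →L[ℂ] G) Λ) = φ₁ b Ψ)
    (b : B) (c' : T) :
    ⟪adjoint v (φ₂ c' Ψ), (b : G →L[ℂ] G) Λ⟫_ℂ = ψ b (star c') := by
  rw [ContinuousLinearMap.adjoint_inner_left, hv, inner_apply_apply_of_commute φ₁ φ₂ hcomm, hrep]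

theorem inner_adjoint_sub_adjoint_sub_eq {π₁ : A →⋆ₐ[ℂ] (H →L[ℂ] H)}
    {π₂ : B.commutant →⋆ₐ[ℂ] (H →L[ℂ] H)} {Ω : H} {ω : A →ₗ[ℂ] B.commutant →ₗ[ℂ] ℂ} {E : A → B}
    {u : G →L[ℂ] H} {φ₁ : B →⋆ₐ[ℂ] (K →L[ℂ] K)} {φ₂ : T →⋆ₐ[ℂ] (K →L[ℂ] K)} {Ψ : K}
    {ψ : B →ₗ[ℂ] T →ₗ[ℂ] ℂ} {v : G →L[ℂ] K} (hΛ : ‖Λ‖ = 1)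
    (hcommω : ∀ a b', Commute (π₁ a) (π₂ b')) (hrepω : ∀ a b', ω a b' = ⟪Ω, π₁ a (π₂ b' Ω)⟫_ℂ)
    (hE : ∀ a (b' : B.commutant), ω a b' = ⟪Λ, (E a : G →L[ℂ] G) ((b' : G →L[ℂ] G) Λ)⟫_ℂ)
    (hu : ∀ ξ, ‖u ξ‖ = ‖ξ‖) (huΛ : ∀ b' : B.commutant, u ((b' : G →L[ℂ] G) Λ) = π₂ b' Ω)
    (hrange : ∀ ξ, u ξ ∈ (span ℂ (Set.range fun b' => π₂ b' Ω)).topologicalClosure)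
    (hcommψ : ∀ b c', Commute (φ₁ b) (φ₂ c')) (hrepψ : ∀ b c', ψ b c' = ⟪Ψ, φ₁ b (φ₂ c' Ψ)⟫_ℂ)
    (hv : ∀ ξ, ‖v ξ‖ = ‖ξ‖) (hvΛ : ∀ b : B, v ((b : G →L[ℂ] G) Λ) = φ₁ b Ψ) (a : A) (c' : T) :
    ⟪adjoint v (φ₂ c' Ψ - ⟪Ψ, φ₂ c' Ψ⟫_ℂ • Ψ), adjoint u (π₁ a Ω - ⟪Ω, π₁ a Ω⟫_ℂ • Ω)⟫_ℂ =
      ψ (E a) (star c') - ω a 1 * ψ 1 (star c') := by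
  have hΛΛ : ⟪Λ, Λ⟫_ℂ = 1 := by simp [inner_self_eq_norm_sq_to_K, hΛ]
  have hΩ : u Λ = Ω := by simpa using huΛ 1
  have huΩ : adjoint u Ω = Λ := hΩ ▸ adjoint_apply_apply_of_norm_map hu Λ
  have hΨ : v Λ = Ψ := by simpa using hvΛ 1
  have hvΨ : adjoint v Ψ = Λ := hΨ ▸ adjoint_apply_apply_of_norm_map hv Λ
  have hΩπ : ⟪Ω, π₁ a Ω⟫_ℂ = ω a 1 := by simpa using (hrepω a 1).symm
  have hΛE : ⟪Λ, (E a : G →L[ℂ] G) Λ⟫_ℂ = ω a 1 := by simpa using (hE a 1).symm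
  have hvΛ₁ : ⟪adjoint v (φ₂ c' Ψ), Λ⟫_ℂ = ψ 1 (star c') := by
    simpa using inner_adjoint_rep_eq hcommψ hrepψ hvΛ 1 c'
  rw [map_sub, map_sub, map_smul, map_smul, huΩ, hvΨ, adjoint_apply_rep_eq hcommω hrepω hE hu huΛ
    hrange, hΩπ]
  have hΨφ : ⟪φ₂ c' Ψ, Ψ⟫_ℂ = ψ 1 (star c') := by
    rw [← hvΛ₁, ContinuousLinearMap.adjoint_inner_left, hΨ]
  simp only [inner_sub_left, inner_sub_right, inner_smul_left, inner_smul_right, inner_conj_symm,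
    inner_adjoint_rep_eq hcommψ hrepψ hvΛ, hvΛ₁, hΨφ, hΛΛ, hΛE]
  ring

end Coupling

theorem composition_trivial_iff_orthogonal_general
    (A : VonNeumannAlgebra Gm) (B : VonNeumannAlgebra Gn) (C : VonNeumannAlgebra Gx)
    (Λm : Gm) (Λn : Gn) (Λx : Gx)
    (hB : Std B Λn)
    -- the couplings ω, ψ and their associated maps
    (ω : ↥A →ₗ[ℂ] ↥B.commutant →ₗ[ℂ] ℂ) (hω : IsCoupling A B Λm Λn ω)
    (ψ : ↥B →ₗ[ℂ] ↥C.commutant →ₗ[ℂ] ℂ) (hψ : IsCoupling B C Λn Λx ψ)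
    (Eω : ↥A → ↥B)
    (hEω : ∀ (a : ↥A) (b' : ↥B.commutant),
      ω a b' = inner ℂ Λn ((Eω a : Gn →L[ℂ] Gn) ((b' : Gn →L[ℂ] Gn) Λn)))
    (Eψ : ↥B → ↥C)
    (hEψ : ∀ (b : ↥B) (c' : ↥C.commutant),
      ψ b c' = inner ℂ Λx ((Eψ b : Gx →L[ℂ] Gx) ((c' : Gx →L[ℂ] Gx) Λx)))
    -- the composition `ω ∘ ψ`
    (ωψ : ↥A →ₗ[ℂ] ↥C.commutant →ₗ[ℂ] ℂ)
    (hωψ : ∀ (a : ↥A) (c' : ↥C.commutant),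
      ωψ a c' = inner ℂ Λx ((Eψ (Eω a) : Gx →L[ℂ] Gx) ((c' : Gx →L[ℂ] Gx) Λx)))
    -- a cyclic representation `(H_ω, π_ω, Ω_ω)` of `(A ⊙ B′, ω)`
    (π₁ : ↥A →⋆ₐ[ℂ] (Hw →L[ℂ] Hw)) (π₂ : ↥B.commutant →⋆ₐ[ℂ] (Hw →L[ℂ] Hw)) (Ωw : Hw)
    (hcommω : ∀ (a : ↥A) (b' : ↥B.commutant), Commute (π₁ a) (π₂ b'))
    (hrepω : ∀ (a : ↥A) (b' : ↥B.commutant), ω a b' = inner ℂ Ωw (π₁ a (π₂ b' Ωw)))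
    -- a cyclic representation `(K_ψ, φ_ψ, Ψ_ψ)` of `(B ⊙ C′, ψ)`
    (φ₁ : ↥B →⋆ₐ[ℂ] (Kp →L[ℂ] Kp)) (φ₂ : ↥C.commutant →⋆ₐ[ℂ] (Kp →L[ℂ] Kp)) (Ψp : Kp)
    (hcommψ : ∀ (b : ↥B) (c' : ↥C.commutant), Commute (φ₁ b) (φ₂ c'))
    (hrepψ : ∀ (b : ↥B) (c' : ↥C.commutant), ψ b c' = inner ℂ Ψp (φ₁ b (φ₂ c' Ψp)))
    -- the subspaces `H_μ`, `H_ν` of `H_ω` and `K_ν`, `K_ξ` of `K_ψ`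
    (Hμs Hνs : Submodule ℂ Hw) (Kνs Kξs : Submodule ℂ Kp)
    (hHμs : Hμs = (Submodule.span ℂ (Set.range fun a : ↥A => π₁ a Ωw)).topologicalClosure)
    (hHνs : Hνs =
      (Submodule.span ℂ (Set.range fun b' : ↥B.commutant => π₂ b' Ωw)).topologicalClosure)
    (hKξs : Kξs =
      (Submodule.span ℂ (Set.range fun c' : ↥C.commutant => φ₂ c' Ψp)).topologicalClosure)
    -- the orthogonal projections `P_ν : H_ω → H_ν` and `Q_ν : K_ψ → K_ν`
    (Pν : Hw →L[ℂ] Hw)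
    (hPν₂ : ∀ x : Hw, ∀ v ∈ Hνs, (inner ℂ (x - Pν x) v : ℂ) = 0)
    (Qν : Kp →L[ℂ] Kp)
    (hQν₂ : ∀ y : Kp, ∀ v ∈ Kνs, (inner ℂ (y - Qν y) v : ℂ) = 0)
    -- the unitaries `u_ν : G_ν → H_ν ⊆ H_ω` and `v_ν : G_ν → K_ν ⊆ K_ψ`
    (uν : Gn →L[ℂ] Hw) (huνiso : ∀ ξ : Gn, ‖uν ξ‖ = ‖ξ‖)
    (huν : ∀ b' : ↥B.commutant, uν ((b' : Gn →L[ℂ] Gn) Λn) = π₂ b' Ωw)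
    (huνrange : Set.range uν = (Hνs : Set Hw))
    (vν : Gn →L[ℂ] Kp) (hvνiso : ∀ ξ : Gn, ‖vν ξ‖ = ‖ξ‖)
    (hvν : ∀ b : ↥B, vν ((b : Gn →L[ℂ] Gn) Λn) = φ₁ b Ψp)
    (hvνrange : Set.range vν = (Kνs : Set Kp)) :
    -- `ω ∘ ψ = μ ⊙ ξ′` iff `u_ν*[P_ν H_μ ⊖ ℂΩ_ω] ⊥ v_ν*[Q_ν K_ξ ⊖ ℂΨ_ψ]`
    ((∀ (a : ↥A) (c' : ↥C.commutant),
        ωψ a c' = inner ℂ Λm ((a : Gm →L[ℂ] Gm) Λm) * inner ℂ Λx ((c' : Gx →L[ℂ] Gx) Λx)) ↔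
      (∀ ξ₁ ∈ (ContinuousLinearMap.adjoint uν) ''
            {w : Hw | (∃ x ∈ Hμs, w = Pν x) ∧ (inner ℂ Ωw w : ℂ) = 0},
        ∀ ξ₂ ∈ (ContinuousLinearMap.adjoint vν) ''
            {w : Kp | (∃ y ∈ Kξs, w = Qν y) ∧ (inner ℂ Ψp w : ℂ) = 0},
        (inner ℂ ξ₁ ξ₂ : ℂ) = 0)) := by
  have hΩ : uν Λn = Ωw := by simpa using huν 1
  have hΨ : vν Λn = Ψp := by simpa using hvν 1
  have hu : ∀ ξ, uν ξ ∈ Hνs := fun ξ => huνrange.subset ⟨ξ, rfl⟩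
  have hv : ∀ ξ, vν ξ ∈ Kνs := fun ξ => hvνrange.subset ⟨ξ, rfl⟩
  rw [image_adjoint_proj_eq hPν₂ hu (hΩ ▸ hu Λn), image_adjoint_proj_eq hQν₂ hv (hΨ ▸ hv Λn)]
  subst hHμs hHνs hKξs
  have hΩs : Ωw ∈ Set.range fun a : A => π₁ a Ωw := ⟨1, by simp⟩
  have hΨs : Ψp ∈ Set.range fun c' : C.commutant => φ₂ c' Ψp := ⟨1, by simp⟩
  rw [forall_inner_image_orthogonal_iff _ _
    ((span ℂ _).le_topologicalClosure (Submodule.subset_span hΩs)) (hΩ ▸ (huνiso Λn).trans hB.1)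
    ((span ℂ _).le_topologicalClosure (Submodule.subset_span hΨs)) (hΨ ▸ (hvνiso Λn).trans hB.1)]
  simp only [Set.forall_mem_range]
  refine forall_congr' fun a => star_involutive.surjective.forall.trans (forall_congr' fun c' => ?_)
  rw [inner_eq_zero_symm, inner_adjoint_sub_adjoint_sub_eq hB.1 hcommω hrepω hEω huνiso huν hu
    hcommψ hrepψ hvνiso hvν, sub_eq_zero, hEψ, ← hωψ, hω.2.1, hψ.2.2]

/-- `ω ∘ ψ = μ ⊙ ξ′` if and only if the subspaces
`u_ν*[P_ν H_μ ⊖ ℂΩ_ω]` and `v_ν*[Q_ν K_ξ ⊖ ℂΨ_ψ]` of `G_ν` are orthogonal. -/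
theorem composition_trivial_iff_orthogonal
    (A : VonNeumannAlgebra Gm) (B : VonNeumannAlgebra Gn) (C : VonNeumannAlgebra Gx)
    (Λm : Gm) (Λn : Gn) (Λx : Gx)
    (hA : Std A Λm) (hB : Std B Λn) (hC : Std C Λx)
    -- the couplings ω, ψ and their associated maps
    (ω : ↥A →ₗ[ℂ] ↥B.commutant →ₗ[ℂ] ℂ) (hω : IsCoupling A B Λm Λn ω)
    (ψ : ↥B →ₗ[ℂ] ↥C.commutant →ₗ[ℂ] ℂ) (hψ : IsCoupling B C Λn Λx ψ)
    (Eω : ↥A → ↥B)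
    (hEω : ∀ (a : ↥A) (b' : ↥B.commutant),
      ω a b' = inner ℂ Λn ((Eω a : Gn →L[ℂ] Gn) ((b' : Gn →L[ℂ] Gn) Λn)))
    (Eψ : ↥B → ↥C)
    (hEψ : ∀ (b : ↥B) (c' : ↥C.commutant),
      ψ b c' = inner ℂ Λx ((Eψ b : Gx →L[ℂ] Gx) ((c' : Gx →L[ℂ] Gx) Λx)))
    -- the composition `ω ∘ ψ`
    (ωψ : ↥A →ₗ[ℂ] ↥C.commutant →ₗ[ℂ] ℂ)
    (hωψ : ∀ (a : ↥A) (c' : ↥C.commutant),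
      ωψ a c' = inner ℂ Λx ((Eψ (Eω a) : Gx →L[ℂ] Gx) ((c' : Gx →L[ℂ] Gx) Λx)))
    -- a cyclic representation `(H_ω, π_ω, Ω_ω)` of `(A ⊙ B′, ω)`
    (π₁ : ↥A →⋆ₐ[ℂ] (Hw →L[ℂ] Hw)) (π₂ : ↥B.commutant →⋆ₐ[ℂ] (Hw →L[ℂ] Hw)) (Ωw : Hw)
    (hcommω : ∀ (a : ↥A) (b' : ↥B.commutant), Commute (π₁ a) (π₂ b'))
    (hcycω : Dense (Submodule.span ℂ
      (Set.range fun p : ↥A × ↥B.commutant => π₁ p.1 (π₂ p.2 Ωw)) : Set Hw))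
    (hrepω : ∀ (a : ↥A) (b' : ↥B.commutant), ω a b' = inner ℂ Ωw (π₁ a (π₂ b' Ωw)))
    -- a cyclic representation `(K_ψ, φ_ψ, Ψ_ψ)` of `(B ⊙ C′, ψ)`
    (φ₁ : ↥B →⋆ₐ[ℂ] (Kp →L[ℂ] Kp)) (φ₂ : ↥C.commutant →⋆ₐ[ℂ] (Kp →L[ℂ] Kp)) (Ψp : Kp)
    (hcommψ : ∀ (b : ↥B) (c' : ↥C.commutant), Commute (φ₁ b) (φ₂ c'))
    (hcycψ : Dense (Submodule.span ℂ
      (Set.range fun p : ↥B × ↥C.commutant => φ₁ p.1 (φ₂ p.2 Ψp)) : Set Kp))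
    (hrepψ : ∀ (b : ↥B) (c' : ↥C.commutant), ψ b c' = inner ℂ Ψp (φ₁ b (φ₂ c' Ψp)))
    -- the subspaces `H_μ`, `H_ν` of `H_ω` and `K_ν`, `K_ξ` of `K_ψ`
    (Hμs Hνs : Submodule ℂ Hw) (Kνs Kξs : Submodule ℂ Kp)
    (hHμs : Hμs = (Submodule.span ℂ (Set.range fun a : ↥A => π₁ a Ωw)).topologicalClosure)
    (hHνs : Hνs =
      (Submodule.span ℂ (Set.range fun b' : ↥B.commutant => π₂ b' Ωw)).topologicalClosure)
    (hKνs : Kνs = (Submodule.span ℂ (Set.range fun b : ↥B => φ₁ b Ψp)).topologicalClosure)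
    (hKξs : Kξs =
      (Submodule.span ℂ (Set.range fun c' : ↥C.commutant => φ₂ c' Ψp)).topologicalClosure)
    -- the orthogonal projections `P_ν : H_ω → H_ν` and `Q_ν : K_ψ → K_ν`
    (Pν : Hw →L[ℂ] Hw)
    (hPν₁ : ∀ x : Hw, Pν x ∈ Hνs)
    (hPν₂ : ∀ x : Hw, ∀ v ∈ Hνs, (inner ℂ (x - Pν x) v : ℂ) = 0)
    (Qν : Kp →L[ℂ] Kp)
    (hQν₁ : ∀ y : Kp, Qν y ∈ Kνs)
    (hQν₂ : ∀ y : Kp, ∀ v ∈ Kνs, (inner ℂ (y - Qν y) v : ℂ) = 0)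
    -- the unitaries `u_ν : G_ν → H_ν ⊆ H_ω` and `v_ν : G_ν → K_ν ⊆ K_ψ`
    (uν : Gn →L[ℂ] Hw) (huνiso : ∀ ξ : Gn, ‖uν ξ‖ = ‖ξ‖)
    (huν : ∀ b' : ↥B.commutant, uν ((b' : Gn →L[ℂ] Gn) Λn) = π₂ b' Ωw)
    (huνrange : Set.range uν = (Hνs : Set Hw))
    (vν : Gn →L[ℂ] Kp) (hvνiso : ∀ ξ : Gn, ‖vν ξ‖ = ‖ξ‖)
    (hvν : ∀ b : ↥B, vν ((b : Gn →L[ℂ] Gn) Λn) = φ₁ b Ψp)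
    (hvνrange : Set.range vν = (Kνs : Set Kp)) :
    -- `ω ∘ ψ = μ ⊙ ξ′` iff `u_ν*[P_ν H_μ ⊖ ℂΩ_ω] ⊥ v_ν*[Q_ν K_ξ ⊖ ℂΨ_ψ]`
    ((∀ (a : ↥A) (c' : ↥C.commutant),
        ωψ a c' = inner ℂ Λm ((a : Gm →L[ℂ] Gm) Λm) * inner ℂ Λx ((c' : Gx →L[ℂ] Gx) Λx)) ↔
      (∀ ξ₁ ∈ (ContinuousLinearMap.adjoint uν) ''
            {w : Hw | (∃ x ∈ Hμs, w = Pν x) ∧ (inner ℂ Ωw w : ℂ) = 0},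
        ∀ ξ₂ ∈ (ContinuousLinearMap.adjoint vν) ''
            {w : Kp | (∃ y ∈ Kξs, w = Qν y) ∧ (inner ℂ Ψp w : ℂ) = 0},
        (inner ℂ ξ₁ ξ₂ : ℂ) = 0)) :=
  composition_trivial_iff_orthogonal_general A B C Λm Λn Λx hB ω hω ψ hψ Eω hEω Eψ hEψ ωψ hωψ π₁ π₂
    Ωw hcommω hrepω φ₁ φ₂ Ψp hcommψ hrepψ Hμs Hνs Kνs Kξs hHμs hHνs hKξs Pν hPν₂ Qν hQν₂ uν huνiso
    huν huνrange vν hvνiso hvν hvνrange
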